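/- arXiv:1012.1737 — 2 statements merged into one kernel-verified Lean document; each statement's English description precedes it below -/
import Mathlib

section
/- Define β(s⃗) = ∑_{a⃗ ∈ {-1,1}^N} √2 · cos(π/4·(N+1−∑ⱼaⱼ)) · ∏ₗ aₗ^{sₗ} and γ(s⃗) = ∑_{a⃗ ∈ {-1,1}^N} √2 · sin(π/4·(N+1−∑ⱼaⱼ)) · ∏ₗ aₗ^{sₗ}. Then for any (N−1)-bit string s⃗' and bit s_N, β(s⃗', s_N) = β(s⃗') − (−1)^{s_N} · γ(s⃗'), where β(s⃗') and γ(s⃗') are the corresponding (N−1)-party quantities. -/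
open Real Finset

/-- The MABK coefficient `β(s⃗)` for `n` parties. -/
noncomputable def mabkBeta (n : ℕ) (s : Fin n → Bool) : ℝ :=
  ∑ a : Fin n → Bool,
    Real.sqrt 2 *
      Real.cos (Real.pi / 4 *
        ((n : ℝ) + 1 - ∑ j, (if a j then (1 : ℝ) else -1))) *
      ∏ l, (if a l then (1 : ℝ) else -1) ^ (if s l then 1 else 0)

/-- The companion quantity `γ(s⃗)` for `n` parties, with `sin` in place of `cos`. -/
noncomputable def mabkGamma (n : ℕ) (s : Fin n → Bool) : ℝ :=
  ∑ a : Fin n → Bool,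
    Real.sqrt 2 *
      Real.sin (Real.pi / 4 *
        ((n : ℝ) + 1 - ∑ j, (if a j then (1 : ℝ) else -1))) *
      ∏ l, (if a l then (1 : ℝ) else -1) ^ (if s l then 1 else 0)

theorem mabkBeta_recursion (N : ℕ) (s' : Fin N → Bool) (sN : Bool) :
    mabkBeta (N + 1) (Fin.snoc s' sN) =
      mabkBeta N s' - (-1 : ℝ) ^ (if sN then 1 else 0) * mabkGamma N s' := by
  rw [mabkBeta, mabkBeta, mabkGamma]
  rw [← Equiv.sum_comp (Fin.snocEquiv fun _ : Fin (N + 1) => Bool)]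
  rw [Fintype.sum_prod_type_right]
  rw [Finset.mul_sum, ← Finset.sum_sub_distrib]
  apply Finset.sum_congr rfl
  intro a _
  have hsnoc : ∀ b : Bool, (Fin.snocEquiv fun _ : Fin (N + 1) => Bool) (b, a)
      = Fin.snoc a b := fun b => rfl
  simp only [hsnoc]
  rw [Fintype.sum_bool]
  simp only [Fin.sum_univ_castSucc, Fin.prod_univ_castSucc, Fin.snoc_castSucc,
    Fin.snoc_last]
  set S : ℝ := ∑ j : Fin N, (if a j then (1 : ℝ) else -1) with hS
  set P : ℝ := ∏ l : Fin N, (if a l then (1 : ℝ) else -1) ^ (if s' l then 1 else 0)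
    with hP
  have h1 : Real.pi / 4 * ((↑(N + 1) : ℝ) + 1 - (S + 1))
      = Real.pi / 4 * ((N : ℝ) + 1 - S) := by push_cast; ring
  have h2 : Real.pi / 4 * ((↑(N + 1) : ℝ) + 1 - (S + -1))
      = Real.pi / 4 * ((N : ℝ) + 1 - S) + Real.pi / 2 := by push_cast; ring
  simp only [eq_self_iff_true, if_true, Bool.false_eq_true, if_false, h1, h2,
    Real.cos_add_pi_div_two]
  cases sN
  · simp
    ring
  · simp
end

section
/- Define γ(s⃗) = ∑_{a⃗ ∈ {-1,1}^N} √2 · sin(π/4·(N+1−∑ⱼaⱼ)) · ∏ₗ aₗ^{sₗ} and β analogously with cos. Then for any (N−1)-bit string s⃗' and bit s_N, γ(s⃗', s_N) = −(−1)^{1−s_N} · β(s⃗', 1−s_N). -/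
open Real Finset

theorem mabkGamma_recursion (N : ℕ) (s' : Fin N → Bool) (sN : Bool) :
    mabkGamma (N + 1) (Fin.snoc s' sN) =
      -(-1 : ℝ) ^ (if sN then 0 else 1) * mabkBeta (N + 1) (Fin.snoc s' (!sN)) := by
  unfold mabkGamma mabkBeta
  rw [Finset.mul_sum]
  refine Fintype.sum_bijective
    (fun a : Fin (N + 1) → Bool =>
      Function.update a (Fin.last N) (!a (Fin.last N)))
    (Function.Involutive.bijective ?_) _ _ ?_
  · intro a
    funext i
    by_cases h : i = Fin.last N
    · subst h; simp
    · simp [Function.update_of_ne h]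
  · intro a
    simp only [Fin.sum_univ_castSucc, Fin.prod_univ_castSucc, Fin.snoc_castSucc,
      Fin.snoc_last, Function.update_self,
      Function.update_of_ne (Fin.castSucc_lt_last _).ne]
    set S : ℝ := ∑ i : Fin N, (if a i.castSucc then (1:ℝ) else -1) with hS
    set P : ℝ := ∏ i : Fin N,
      (if a i.castSucc then (1:ℝ) else -1) ^ (if s' i then 1 else 0) with hP
    cases h : a (Fin.last N) <;> cases sN <;>
      simp only [Bool.not_true, Bool.not_false, Bool.false_eq_true, if_true, if_false,
        ite_true, ite_false, pow_one, pow_zero, mul_one, Nat.cast_add, Nat.cast_one]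
    · have harg : Real.pi / 4 * ((N : ℝ) + 1 + 1 - (S + 1)) =
        Real.pi / 4 * ((N : ℝ) + 1 + 1 - (S + -1)) - Real.pi / 2 := by ring
      rw [harg, Real.cos_sub_pi_div_two]
      ring
    · have harg : Real.pi / 4 * ((N : ℝ) + 1 + 1 - (S + 1)) =
        Real.pi / 4 * ((N : ℝ) + 1 + 1 - (S + -1)) - Real.pi / 2 := by ring
      rw [harg, Real.cos_sub_pi_div_two]
      ring
    · have harg : Real.pi / 4 * ((N : ℝ) + 1 + 1 - (S + -1)) =
        Real.pi / 4 * ((N : ℝ) + 1 + 1 - (S + 1)) + Real.pi / 2 := by ring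
      rw [harg, Real.cos_add_pi_div_two]
      ring
    · have harg : Real.pi / 4 * ((N : ℝ) + 1 + 1 - (S + -1)) =
        Real.pi / 4 * ((N : ℝ) + 1 + 1 - (S + 1)) + Real.pi / 2 := by ring
      rw [harg, Real.cos_add_pi_div_two]
      ring
end
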